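/- arXiv:2408.05104 — 2 statements merged into one kernel-verified Lean document; each statement's English description precedes it below -/
import Mathlib

section
/- Let Ẑ = B†(P_{cl ran B} M P_{ker C ⊥})_r be bounded (well-defined on H₂ by the assumption ran((P_{cl ran B} M P_{ker C ⊥})_r) ⊆ dom(B†)), and let X̂ = Ẑ C†. Then X̂ is bounded if and only if C(ker(Ẑ) ∩ ker(C)⊥) is closed in ran(C). -/
open scoped InnerProductSpace RealInnerProductSpace
open ContinuousLinearMap
noncomputable section

/-- Orthogonal projection onto the closure of the range of a bounded operator. -/
noncomputable def projClosureRan {E F : Type*}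
    [NormedAddCommGroup E] [InnerProductSpace ℝ E] [CompleteSpace E]
    [NormedAddCommGroup F] [InnerProductSpace ℝ F] [CompleteSpace F]
    (C : E →L[ℝ] F) : F →L[ℝ] F :=
  letI : CompleteSpace ((LinearMap.range (C : E →ₗ[ℝ] F)).topologicalClosure) :=
    (Submodule.isClosed_topologicalClosure _).completeSpace_coe
  ((LinearMap.range (C : E →ₗ[ℝ] F)).topologicalClosure).subtypeL ∘L
    Submodule.orthogonalProjectionOnto ((LinearMap.range (C : E →ₗ[ℝ] F)).topologicalClosure)

/-- Orthogonal projection onto `(ker C)ᗮ`. -/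
noncomputable def projKerPerp {E F : Type*}
    [NormedAddCommGroup E] [InnerProductSpace ℝ E] [CompleteSpace E]
    [NormedAddCommGroup F] [InnerProductSpace ℝ F] [CompleteSpace F]
    (C : E →L[ℝ] F) : E →L[ℝ] E :=
  letI : CompleteSpace ((LinearMap.ker (C : E →ₗ[ℝ] F))ᗮ : Submodule ℝ E) :=
    (Submodule.isClosed_orthogonal _).completeSpace_coe
  ((LinearMap.ker (C : E →ₗ[ℝ] F))ᗮ).subtypeL ∘L
    Submodule.orthogonalProjectionOnto ((LinearMap.ker (C : E →ₗ[ℝ] F))ᗮ)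

/-- `Cd` is the Moore–Penrose inverse of the bounded operator `C`. -/
structure IsMPInv {E F : Type*}
    [NormedAddCommGroup E] [InnerProductSpace ℝ E] [CompleteSpace E]
    [NormedAddCommGroup F] [InnerProductSpace ℝ F] [CompleteSpace F]
    (C : E →L[ℝ] F) (Cd : F →ₗ.[ℝ] E) : Prop where
  dom_eq : Cd.domain = LinearMap.range (C : E →ₗ[ℝ] F) ⊔ (LinearMap.range (C : E →ₗ[ℝ] F))ᗮ
  mem_ran : ∀ x : E, C x ∈ Cd.domain
  val_mem : ∀ k (hk : k ∈ Cd.domain), Cd ⟨k, hk⟩ ∈ (LinearMap.ker (C : E →ₗ[ℝ] F))ᗮ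
  map_val : ∀ k (hk : k ∈ Cd.domain), C (Cd ⟨k, hk⟩) = projClosureRan C k

section Aux

variable {E F : Type*}
    [NormedAddCommGroup E] [InnerProductSpace ℝ E] [CompleteSpace E]
    [NormedAddCommGroup F] [InnerProductSpace ℝ F] [CompleteSpace F]

set_option linter.unusedSectionVars false in
lemma aux_norm_orthProj_le (K : Submodule ℝ E) [Submodule.HasOrthogonalProjection K] (y : E) :
    ‖(Submodule.orthogonalProjectionOnto K y : E)‖ ≤ ‖y‖ := by
  calc ‖(Submodule.orthogonalProjectionOnto K y : E)‖ = ‖Submodule.orthogonalProjectionOnto K y‖ := rfl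
    _ ≤ ‖Submodule.orthogonalProjectionOnto K‖ * ‖y‖ := (Submodule.orthogonalProjectionOnto K).le_opNorm y
    _ ≤ 1 * ‖y‖ :=
        mul_le_mul_of_nonneg_right (Submodule.orthogonalProjectionOnto_norm_le K) (norm_nonneg y)
    _ = ‖y‖ := one_mul _

set_option linter.unusedSectionVars false in
lemma aux_mem_eq_zero {K : Submodule ℝ E} {x : E} (h1 : x ∈ K) (h2 : x ∈ Kᗮ) : x = 0 :=
  inner_self_eq_zero.mp (h2 x h1)

lemma aux_projClosureRan_of_mem (C : E →L[ℝ] F) {z : F} (hz : z ∈ LinearMap.range (C : E →ₗ[ℝ] F)) :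
    projClosureRan C z = z := by
  letI : CompleteSpace ((LinearMap.range (C : E →ₗ[ℝ] F)).topologicalClosure) :=
    (Submodule.isClosed_topologicalClosure _).completeSpace_coe
  have : projClosureRan C z =
      (((LinearMap.range (C : E →ₗ[ℝ] F)).topologicalClosure).subtypeL
        (Submodule.orthogonalProjectionOnto ((LinearMap.range (C : E →ₗ[ℝ] F)).topologicalClosure) z)) := rfl
  rw [this, Submodule.subtypeL_apply]
  exact Submodule.starProjection_eq_self_iff.mpr
    (Submodule.le_topologicalClosure _ hz)

lemma aux_norm_projClosureRan_le (C : E →L[ℝ] F) (z : F) :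
    ‖projClosureRan C z‖ ≤ ‖z‖ := by
  letI : CompleteSpace ((LinearMap.range (C : E →ₗ[ℝ] F)).topologicalClosure) :=
    (Submodule.isClosed_topologicalClosure _).completeSpace_coe
  have : projClosureRan C z =
      (((LinearMap.range (C : E →ₗ[ℝ] F)).topologicalClosure).subtypeL
        (Submodule.orthogonalProjectionOnto ((LinearMap.range (C : E →ₗ[ℝ] F)).topologicalClosure) z)) := rfl
  rw [this, Submodule.subtypeL_apply]
  exact aux_norm_orthProj_le _ z

end Aux

/-- Let Ẑ = B†(P_{cl ran B} M P_{ker C ⊥})_r be bounded (well-defined on all of H₁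
by the assumption that the range of the rank-r truncated SVD Y of P_{cl ran B} M P_{ker C ⊥} lies
in dom(B†)), and let X̂ = Ẑ C†.  Then X̂ is bounded if and only if C(ker(Ẑ) ∩ ker(C)ᗮ) is closed
in ran(C). -/
theorem stmt12 {H₁ H₂ H₃ H₄ : Type*}
    [NormedAddCommGroup H₁] [InnerProductSpace ℝ H₁] [CompleteSpace H₁]
    [NormedAddCommGroup H₂] [InnerProductSpace ℝ H₂] [CompleteSpace H₂]
    [NormedAddCommGroup H₃] [InnerProductSpace ℝ H₃] [CompleteSpace H₃]
    [NormedAddCommGroup H₄] [InnerProductSpace ℝ H₄] [CompleteSpace H₄]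
    {ι : Type*} (e : HilbertBasis ι ℝ H₁)
    (M : H₁ →L[ℝ] H₄) (B : H₃ →L[ℝ] H₄) (C : H₁ →L[ℝ] H₂) (r : ℕ)
    (hMHS : Summable fun i => ‖M (e i)‖ ^ 2)
    -- rank-r truncated SVD Y of P_{cl ran B} M P_{ker C ⊥}:
    (σ : ℕ → ℝ) (hσmono : Antitone σ) (hσpos : ∀ n, 0 ≤ σ n)
    (u : ℕ → H₁) (v : ℕ → H₄) (hu : Orthonormal ℝ u) (hv : Orthonormal ℝ v)
    (hSVD : ∀ h : H₁,
      projClosureRan B (M (projKerPerp C h)) = ∑' i, (σ i * ⟪h, u i⟫) • v i)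
    (Y : H₁ →L[ℝ] H₄)
    (hY : ∀ h : H₁, Y h = ∑ i ∈ Finset.range r, (σ i * ⟪h, u i⟫) • v i)
    -- the Moore–Penrose inverses of B and C:
    (Bd : H₄ →ₗ.[ℝ] H₃) (Cd : H₂ →ₗ.[ℝ] H₁)
    (hB : IsMPInv B Bd) (hC : IsMPInv C Cd)
    (hYdom : ∀ h : H₁, Y h ∈ Bd.domain)
    -- Ẑ = B† Y is bounded:
    (Z : H₁ →L[ℝ] H₃) (hZ : ∀ h : H₁, Z h = Bd ⟨Y h, hYdom h⟩) :
    (∃ K : ℝ, ∀ k (hk : k ∈ Cd.domain), ‖Z (Cd ⟨k, hk⟩)‖ ≤ K * ‖k‖) ↔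
      IsClosed {y : ↥(LinearMap.range (C : H₁ →ₗ[ℝ] H₂)) |
        (y : H₂) ∈ C '' ((LinearMap.ker (Z : H₁ →ₗ[ℝ] H₃) ⊓ (LinearMap.ker (C : H₁ →ₗ[ℝ] H₂))ᗮ : Submodule ℝ H₁) : Set H₁)} := by
  classical
  set N : Submodule ℝ H₁ := LinearMap.ker (Z : H₁ →ₗ[ℝ] H₃) ⊓ (LinearMap.ker (C : H₁ →ₗ[ℝ] H₂))ᗮ with hNdef
  have hNK : N ≤ (LinearMap.ker (C : H₁ →ₗ[ℝ] H₂))ᗮ := inf_le_right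
  have hNZ : N ≤ LinearMap.ker (Z : H₁ →ₗ[ℝ] H₃) := inf_le_left
  have hNclosed : IsClosed (N : Set H₁) := by
    have h1 : (N : Set H₁) =
        (LinearMap.ker (Z : H₁ →ₗ[ℝ] H₃) : Set H₁) ∩ ((LinearMap.ker (C : H₁ →ₗ[ℝ] H₂))ᗮ : Submodule ℝ H₁) := rfl
    rw [h1]
    exact (ContinuousLinearMap.isClosed_ker Z).inter (Submodule.isClosed_orthogonal _)
  -- finite rank of Z
  have hueq : ∀ (h : H₁), ∀ i ∈ Finset.range r,
      ⟪(∑ j ∈ Finset.range r, ⟪h, u j⟫ • u j), u i⟫ = ⟪h, u i⟫ := by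
    intro h i hi
    rw [sum_inner, Finset.sum_eq_single_of_mem i hi]
    · rw [real_inner_smul_left, orthonormal_iff_ite.mp hu, if_pos rfl, mul_one]
    · intro j _ hji
      rw [real_inner_smul_left, orthonormal_iff_ite.mp hu, if_neg hji, mul_zero]
  have hYeq : ∀ h : H₁, Y (∑ j ∈ Finset.range r, ⟪h, u j⟫ • u j) = Y h := by
    intro h
    rw [hY, hY]
    exact Finset.sum_congr rfl fun i hi => by rw [hueq h i hi]
  have hZeq : ∀ h : H₁, Z h = ∑ j ∈ Finset.range r, ⟪h, u j⟫ • Z (u j) := by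
    intro h
    have h1 : Z (∑ j ∈ Finset.range r, ⟪h, u j⟫ • u j) = Z h := by
      rw [hZ, hZ]
      exact congrArg (fun p : Bd.domain => Bd p) (Subtype.ext (hYeq h))
    rw [← h1, map_sum]
    simp only [map_smul]
  set V : Submodule ℝ H₃ :=
    Submodule.span ℝ ((fun i => Z (u i)) '' ((Finset.range r : Set ℕ))) with hVdef
  haveI hVfd : FiniteDimensional ℝ V :=
    FiniteDimensional.span_of_finite ℝ ((Finset.range r).finite_toSet.image _)
  have hZV : ∀ h : H₁, Z h ∈ V := fun h => by
    rw [hZeq h]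
    exact Submodule.sum_mem _ fun i hi =>
      Submodule.smul_mem _ _ (Submodule.subset_span ⟨i, hi, rfl⟩)
  set W : Submodule ℝ H₁ := Nᗮ ⊓ (LinearMap.ker (C : H₁ →ₗ[ℝ] H₂))ᗮ with hWdef
  haveI hWfd : FiniteDimensional ℝ W := by
    refine FiniteDimensional.of_injective
      (LinearMap.codRestrict V (Z.toLinearMap.comp W.subtype) fun w => hZV w) ?_
    intro a b hab
    have h1 : Z ((a : H₁) - b) = 0 := by
      have h2 := congrArg (Subtype.val) hab
      change Z (a : H₁) = Z b at h2
      rw [map_sub, h2, sub_self]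
    have habW : ((a - b : W) : H₁) ∈ W := (a - b).2
    obtain ⟨hw1, hw2⟩ := Submodule.mem_inf.mp habW
    have hN' : ((a - b : W) : H₁) ∈ N := Submodule.mem_inf.mpr
      ⟨LinearMap.mem_ker.mpr (by rw [Submodule.coe_sub]; exact h1), hw2⟩
    have h0 : ((a - b : W) : H₁) = 0 := aux_mem_eq_zero hN' hw1
    have : (a - b : W) = 0 := Subtype.ext h0
    exact sub_eq_zero.mp this
  -- the linear map k ↦ Z (C† k) on dom C†
  set L : Cd.domain →ₗ[ℝ] H₃ := Z.toLinearMap.comp Cd.toFun with hLdef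
  have hLapp : ∀ k (hk : k ∈ Cd.domain), L ⟨k, hk⟩ = Z (Cd ⟨k, hk⟩) := fun _ _ => rfl
  constructor
  · -- boundedness ⇒ closedness
    rintro ⟨K, hK⟩
    have hK' : ∀ p : Cd.domain, ‖L p‖ ≤ K * ‖(p : H₂)‖ := fun p => hK p.1 p.2
    apply IsSeqClosed.isClosed
    intro ys y hys hlim
    simp only [Set.mem_setOf_eq] at hys ⊢
    have hyC : (y : H₂) ∈ LinearMap.range (C : H₁ →ₗ[ℝ] H₂) := y.2
    obtain ⟨x₀, hx₀⟩ := hyC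
    have hydom : (y : H₂) ∈ Cd.domain := hx₀ ▸ hC.mem_ran x₀
    have hdomn : ∀ n : ℕ, ((ys n : H₂)) ∈ Cd.domain := by
      intro n
      obtain ⟨a, _, ha⟩ := hys n
      exact ha ▸ hC.mem_ran a
    have hZn : ∀ n, Z (Cd ⟨(ys n : H₂), hdomn n⟩) = 0 := by
      intro n
      obtain ⟨a, haN, ha⟩ := hys n
      have hmK : Cd ⟨(ys n : H₂), hdomn n⟩ ∈ (LinearMap.ker (C : H₁ →ₗ[ℝ] H₂))ᗮ := hC.val_mem _ _
      have hCm : C (Cd ⟨(ys n : H₂), hdomn n⟩) = (ys n : H₂) := by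
        rw [hC.map_val]
        exact aux_projClosureRan_of_mem C (ys n).2
      have haK : a ∈ (LinearMap.ker (C : H₁ →ₗ[ℝ] H₂))ᗮ := (Submodule.mem_inf.mp haN).2
      have hma : Cd ⟨(ys n : H₂), hdomn n⟩ - a = 0 := by
        refine aux_mem_eq_zero (K := LinearMap.ker (C : H₁ →ₗ[ℝ] H₂)) ?_ (Submodule.sub_mem _ hmK haK)
        rw [LinearMap.mem_ker, map_sub, ContinuousLinearMap.coe_coe, hCm, ha, sub_self]
      rw [sub_eq_zero.mp hma]
      exact LinearMap.mem_ker.mp ((Submodule.mem_inf.mp haN).1)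
    have hbound : ∀ n, ‖Z (Cd ⟨(y : H₂), hydom⟩)‖ ≤ K * ‖(y : H₂) - (ys n : H₂)‖ := by
      intro n
      have h1 : L ((⟨(y : H₂), hydom⟩ : Cd.domain) - ⟨(ys n : H₂), hdomn n⟩) =
          Z (Cd ⟨(y : H₂), hydom⟩) := by
        rw [map_sub, hLapp, hLapp, hZn n, sub_zero]
      have h2 := hK' ((⟨(y : H₂), hydom⟩ : Cd.domain) - ⟨(ys n : H₂), hdomn n⟩)
      rw [h1] at h2
      simpa using h2
    have hcoe : Filter.Tendsto (fun n => ((ys n : H₂))) Filter.atTop (nhds (y : H₂)) :=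
      tendsto_subtype_rng.mp hlim
    have hlim0 : Filter.Tendsto (fun n => K * ‖(y : H₂) - (ys n : H₂)‖)
        Filter.atTop (nhds 0) := by
      have h1 : Filter.Tendsto (fun n => (y : H₂) - (ys n : H₂)) Filter.atTop
          (nhds ((y : H₂) - (y : H₂))) := tendsto_const_nhds.sub hcoe
      rw [sub_self] at h1
      have h2 := h1.norm
      simp only [norm_zero] at h2
      simpa using h2.const_mul K
    have hle : ‖Z (Cd ⟨(y : H₂), hydom⟩)‖ ≤ 0 :=
      ge_of_tendsto hlim0 (Filter.Eventually.of_forall hbound)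
    have hZy : Z (Cd ⟨(y : H₂), hydom⟩) = 0 := norm_le_zero_iff.mp hle
    refine ⟨Cd ⟨(y : H₂), hydom⟩,
      Submodule.mem_inf.mpr ⟨LinearMap.mem_ker.mpr hZy, hC.val_mem _ _⟩, ?_⟩
    rw [hC.map_val]
    exact aux_projClosureRan_of_mem C y.2
  · -- closedness ⇒ boundedness
    intro hclosed
    have hsub : ∀ z : H₂, z ∈ LinearMap.range (C : H₁ →ₗ[ℝ] H₂) → z ∈ closure (⇑C '' (N : Set H₁)) →
        z ∈ ⇑C '' (N : Set H₁) := by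
      intro z hz hcl
      obtain ⟨cs, hcs, hcslim⟩ := mem_closure_iff_seq_limit.mp hcl
      have hmem : ∀ n, cs n ∈ LinearMap.range (C : H₁ →ₗ[ℝ] H₂) := by
        intro n
        obtain ⟨a, _, ha⟩ := hcs n
        exact ⟨a, ha⟩
      have hlim' : Filter.Tendsto (fun n => (⟨cs n, hmem n⟩ : LinearMap.range (C : H₁ →ₗ[ℝ] H₂)))
          Filter.atTop (nhds (⟨z, hz⟩ : LinearMap.range (C : H₁ →ₗ[ℝ] H₂))) :=
        tendsto_subtype_rng.mpr hcslim
      exact hclosed.isSeqClosed (fun n => hcs n) hlim'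
    set Sc : Submodule ℝ H₂ := (Submodule.map (C : H₁ →ₗ[ℝ] H₂) N).topologicalClosure with hScdef
    haveI : CompleteSpace Sc := (Submodule.isClosed_topologicalClosure _).completeSpace_coe
    set D : Submodule ℝ H₂ := Scᗮ with hDdef
    haveI : CompleteSpace D := (Submodule.isClosed_orthogonal _).completeSpace_coe
    set Q : H₂ →L[ℝ] H₂ := D.subtypeL ∘L Submodule.orthogonalProjectionOnto D with hQdef
    have hQzero : ∀ z ∈ Sc, Q z = 0 := by
      intro z hzS
      have h1 : Submodule.orthogonalProjectionOnto D z = 0 :=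
        Submodule.orthogonalProjectionOnto_apply_of_mem_orthogonal
          (Sc.le_orthogonal_orthogonal hzS)
      have h2 : Q z = D.subtypeL (Submodule.orthogonalProjectionOnto D z) := rfl
      rw [h2, h1]
      simp
    set TW : W →ₗ[ℝ] H₂ := (Q ∘L C).toLinearMap.comp W.subtype with hTWdef
    have hTWinj : LinearMap.ker TW = ⊥ := by
      rw [LinearMap.ker_eq_bot']
      intro w hw
      have h1 : Submodule.orthogonalProjectionOnto D (C (w : H₁)) = 0 := by
        have h0 : (D.subtypeL (Submodule.orthogonalProjectionOnto D (C (w : H₁))) : H₂) = 0 := hw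
        exact Subtype.ext (by simpa using h0)
      have h2 : C (w : H₁) ∈ Dᗮ := Submodule.orthogonalProjectionOnto_eq_zero_iff.mp h1
      have h3 : C (w : H₁) ∈ Sc := by
        rw [hDdef, Submodule.orthogonal_orthogonal] at h2
        exact h2
      have h4 : C (w : H₁) ∈ closure (⇑C '' (N : Set H₁)) := by
        have h5 : (Sc : Set H₂) = closure (⇑C '' (N : Set H₁)) := by
          rw [hScdef, Submodule.topologicalClosure_coe, Submodule.map_coe, ContinuousLinearMap.coe_coe]
        rw [← h5]
        exact h3
      obtain ⟨a, haN, ha⟩ := hsub _ ⟨(w : H₁), rfl⟩ h4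
      obtain ⟨hwN, hwK⟩ := Submodule.mem_inf.mp w.2
      have haK : a ∈ (LinearMap.ker (C : H₁ →ₗ[ℝ] H₂))ᗮ := (Submodule.mem_inf.mp haN).2
      have hwa : (w : H₁) - a = 0 := by
        refine aux_mem_eq_zero (K := LinearMap.ker (C : H₁ →ₗ[ℝ] H₂)) ?_ (Submodule.sub_mem _ hwK haK)
        rw [LinearMap.mem_ker, map_sub, ContinuousLinearMap.coe_coe, ha, ContinuousLinearMap.coe_coe, sub_self]
      have hwN' : (w : H₁) ∈ N := by
        rw [sub_eq_zero] at hwa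
        rw [hwa]; exact haN
      exact Subtype.ext (aux_mem_eq_zero hwN' hwN)
    obtain ⟨c, hc0, hcA⟩ := TW.exists_antilipschitzWith hTWinj
    haveI : CompleteSpace N := hNclosed.completeSpace_coe
    refine ⟨‖Z‖ * (c : ℝ), fun k hk => ?_⟩
    set x : H₁ := Cd ⟨k, hk⟩ with hxdef
    have hxK : x ∈ (LinearMap.ker (C : H₁ →ₗ[ℝ] H₂))ᗮ := hC.val_mem k hk
    set nn : H₁ := (Submodule.orthogonalProjectionOnto N x : H₁) with hnn
    have hnN : nn ∈ N := (Submodule.orthogonalProjectionOnto N x).2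
    set w : H₁ := x - nn with hwdef2
    have hwW : w ∈ W := Submodule.mem_inf.mpr
      ⟨Submodule.sub_starProjection_mem_orthogonal x,
       Submodule.sub_mem _ hxK (hNK hnN)⟩
    have hxsplit : x = w + nn := by rw [hwdef2]; abel
    have hZxw : Z x = Z w := by
      rw [hxsplit, map_add, (show Z nn = 0 from LinearMap.mem_ker.mp (hNZ hnN)), add_zero]
    have hQn : Q (C nn) = 0 :=
      hQzero _ (Submodule.le_topologicalClosure _ (Submodule.mem_map_of_mem hnN))
    have hQxw : Q (C x) = Q (C w) := by
      rw [hxsplit, map_add, map_add, hQn, add_zero]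
    have hb1 : ‖w‖ ≤ (c : ℝ) * ‖Q (C w)‖ := by
      have h0 := hcA.le_mul_dist (⟨w, hwW⟩ : W) 0
      rw [dist_zero_right, map_zero, dist_zero_right] at h0
      exact h0
    have hb2 : ‖Q (C x)‖ ≤ ‖C x‖ := by
      have h0 : Q (C x) = (Submodule.orthogonalProjectionOnto D (C x) : H₂) := rfl
      rw [h0]
      exact aux_norm_orthProj_le D (C x)
    have hb3 : ‖C x‖ ≤ ‖k‖ := by
      rw [hxdef, hC.map_val k hk]
      exact aux_norm_projClosureRan_le C k
    calc ‖Z x‖ = ‖Z w‖ := by rw [hZxw]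
      _ ≤ ‖Z‖ * ‖w‖ := Z.le_opNorm w
      _ ≤ ‖Z‖ * ((c : ℝ) * ‖Q (C w)‖) :=
          mul_le_mul_of_nonneg_left hb1 (norm_nonneg _)
      _ = ‖Z‖ * (c : ℝ) * ‖Q (C x)‖ := by rw [hQxw]; ring
      _ ≤ ‖Z‖ * (c : ℝ) * ‖C x‖ := by
          refine mul_le_mul_of_nonneg_left hb2 ?_
          positivity
      _ ≤ ‖Z‖ * (c : ℝ) * ‖k‖ := by
          refine mul_le_mul_of_nonneg_left hb3 ?_
          positivity
end
end

section
/- Let M ∈ L₂(H₁,H₄), B ∈ B(H₃,H₄), C ∈ B(H₁,H₂), and suppose there is a rank-r truncated SVD Y of P_{cl ran B} M P_{ker C ⊥} with ran(Y) ⊆ dom(B†). Then for X̂ = B†YC† one has ‖M − BX̂C‖²_{HS} = ‖M‖²_{HS} − Σ_{i ≤ r} σᵢ(P_{cl ran B} M P_{ker C ⊥})², where σᵢ denotes the i-th largest singular value. -/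
open scoped InnerProductSpace RealInnerProductSpace
open ContinuousLinearMap
noncomputable section

set_option linter.unusedSectionVars false

section MPHelpers

variable {E F : Type*}
    [NormedAddCommGroup E] [InnerProductSpace ℝ E] [CompleteSpace E]
    [NormedAddCommGroup F] [InnerProductSpace ℝ F] [CompleteSpace F]

section helpers

lemma projClosureRan_mem (C : E →L[ℝ] F) (x : F) :
    projClosureRan C x ∈ (LinearMap.range (C : E →ₗ[ℝ] F)).topologicalClosure := by
  letI : CompleteSpace ((LinearMap.range (C : E →ₗ[ℝ] F)).topologicalClosure) :=
    (Submodule.isClosed_topologicalClosure _).completeSpace_coe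
  exact (Submodule.orthogonalProjectionOnto ((LinearMap.range (C : E →ₗ[ℝ] F)).topologicalClosure) x).2

lemma projClosureRan_eq_self (C : E →L[ℝ] F) {x : F}
    (hx : x ∈ (LinearMap.range (C : E →ₗ[ℝ] F)).topologicalClosure) : projClosureRan C x = x := by
  letI : CompleteSpace ((LinearMap.range (C : E →ₗ[ℝ] F)).topologicalClosure) :=
    (Submodule.isClosed_topologicalClosure _).completeSpace_coe
  exact Submodule.starProjection_eq_self_iff.mpr hx

lemma inner_projClosureRan_self (C : E →L[ℝ] F) (x : F) :
    ⟪x, projClosureRan C x⟫ = ‖projClosureRan C x‖ ^ 2 := by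
  letI : CompleteSpace ((LinearMap.range (C : E →ₗ[ℝ] F)).topologicalClosure) :=
    (Submodule.isClosed_topologicalClosure _).completeSpace_coe
  have h0 := Submodule.starProjection_inner_eq_zero (K := (LinearMap.range (C : E →ₗ[ℝ] F)).topologicalClosure)
    x (projClosureRan C x) (projClosureRan_mem C x)
  have : ⟪x - projClosureRan C x, projClosureRan C x⟫ = 0 := h0
  have h1 : ⟪x, projClosureRan C x⟫ - ⟪projClosureRan C x, projClosureRan C x⟫ = 0 := by
    rw [← inner_sub_left]; exact this
  rw [← real_inner_self_eq_norm_sq]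
  linarith

lemma projKerPerp_eq_of (C : E →L[ℝ] F) (h w : E) (hw : w ∈ (LinearMap.ker (C : E →ₗ[ℝ] F))ᗮ)
    (hker : h - w ∈ LinearMap.ker (C : E →ₗ[ℝ] F)) : projKerPerp C h = w := by
  letI : CompleteSpace ((LinearMap.ker (C : E →ₗ[ℝ] F))ᗮ : Submodule ℝ E) :=
    (Submodule.isClosed_orthogonal _).completeSpace_coe
  have hdecomp : h = (h - w) + w := by abel
  have h1 : Submodule.orthogonalProjectionOnto ((LinearMap.ker (C : E →ₗ[ℝ] F))ᗮ) (h - w) = 0 :=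
    Submodule.orthogonalProjectionOnto_apply_of_mem_orthogonal
      (Submodule.le_orthogonal_orthogonal _ hker)
  calc projKerPerp C h
      = (Submodule.orthogonalProjectionOnto ((LinearMap.ker (C : E →ₗ[ℝ] F))ᗮ) ((h - w) + w) : E) := by
        rw [← hdecomp]; rfl
    _ = w := by
        rw [map_add, h1, zero_add]
        exact Submodule.starProjection_eq_self_iff.mpr hw

lemma projKerPerp_eq_self (C : E →L[ℝ] F) {x : E}
    (hx : x ∈ (LinearMap.ker (C : E →ₗ[ℝ] F))ᗮ) : projKerPerp C x = x := by
  letI : CompleteSpace ((LinearMap.ker (C : E →ₗ[ℝ] F))ᗮ : Submodule ℝ E) :=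
    (Submodule.isClosed_orthogonal _).completeSpace_coe
  exact Submodule.starProjection_eq_self_iff.mpr hx

lemma projKerPerp_of_mem_ker (C : E →L[ℝ] F) {x : E}
    (hx : x ∈ LinearMap.ker (C : E →ₗ[ℝ] F)) : projKerPerp C x = 0 := by
  letI : CompleteSpace ((LinearMap.ker (C : E →ₗ[ℝ] F))ᗮ : Submodule ℝ E) :=
    (Submodule.isClosed_orthogonal _).completeSpace_coe
  have : Submodule.orthogonalProjectionOnto ((LinearMap.ker (C : E →ₗ[ℝ] F))ᗮ) x = 0 :=
    Submodule.orthogonalProjectionOnto_apply_of_mem_orthogonal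
      (Submodule.le_orthogonal_orthogonal _ hx)
  show (Submodule.orthogonalProjectionOnto ((LinearMap.ker (C : E →ₗ[ℝ] F))ᗮ) x : E) = 0
  rw [this]; rfl

lemma inner_projKerPerp_left_eq_right (C : E →L[ℝ] F) (x y : E) :
    ⟪projKerPerp C x, y⟫ = ⟪x, projKerPerp C y⟫ := by
  letI : CompleteSpace ((LinearMap.ker (C : E →ₗ[ℝ] F))ᗮ : Submodule ℝ E) :=
    (Submodule.isClosed_orthogonal _).completeSpace_coe
  exact Submodule.inner_starProjection_left_eq_right _ x y

end helpers

end MPHelpers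

/-- Let M ∈ L₂(H₁,H₄), B ∈ B(H₃,H₄), C ∈ B(H₁,H₂), and suppose there is a rank-r
truncated SVD Y of P_{cl ran B} M P_{ker C ⊥} with ran(Y) ⊆ dom(B†).  Then for X̂ = B†YC† one
has ‖M − BX̂C‖²_HS = ‖M‖²_HS − Σ_{i<r} σᵢ², with σᵢ the singular values of
P_{cl ran B} M P_{ker C ⊥} (HS norms computed with respect to a Hilbert basis `e` of H₁). -/
theorem stmt17 {H₁ H₂ H₃ H₄ : Type*}
    [NormedAddCommGroup H₁] [InnerProductSpace ℝ H₁] [CompleteSpace H₁]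
    [NormedAddCommGroup H₂] [InnerProductSpace ℝ H₂] [CompleteSpace H₂]
    [NormedAddCommGroup H₃] [InnerProductSpace ℝ H₃] [CompleteSpace H₃]
    [NormedAddCommGroup H₄] [InnerProductSpace ℝ H₄] [CompleteSpace H₄]
    {ι : Type*} (e : HilbertBasis ι ℝ H₁)
    (M : H₁ →L[ℝ] H₄) (B : H₃ →L[ℝ] H₄) (C : H₁ →L[ℝ] H₂) (r : ℕ)
    (hMHS : Summable fun i => ‖M (e i)‖ ^ 2)
    -- SVD of P_{cl ran B} M P_{ker C ⊥}, with singular values σ: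
    (σ : ℕ → ℝ) (hσmono : Antitone σ) (hσpos : ∀ n, 0 ≤ σ n)
    (u : ℕ → H₁) (v : ℕ → H₄) (hu : Orthonormal ℝ u) (hv : Orthonormal ℝ v)
    (hSVD : ∀ h : H₁,
      projClosureRan B (M (projKerPerp C h)) = ∑' i, (σ i * ⟪h, u i⟫) • v i)
    -- the rank-r truncated SVD Y, with range inside dom(B†):
    (Y : H₁ →L[ℝ] H₄)
    (hY : ∀ h : H₁, Y h = ∑ i ∈ Finset.range r, (σ i * ⟪h, u i⟫) • v i)
    (Bd : H₄ →ₗ.[ℝ] H₃) (Cd : H₂ →ₗ.[ℝ] H₁)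
    (hB : IsMPInv B Bd) (hC : IsMPInv C Cd)
    (hYdom : ∀ h : H₁, Y h ∈ Bd.domain) :
    (∑' j, ‖M (e j) -
        B (Bd ⟨Y (Cd ⟨C (e j), hC.mem_ran (e j)⟩), hYdom _⟩)‖ ^ 2) =
      (∑' j, ‖M (e j)‖ ^ 2) - ∑ i ∈ Finset.range r, σ i ^ 2 := by
  -- Step A : `Cd (C h) = projKerPerp C h`
  have hA : ∀ h : H₁, Cd ⟨C h, hC.mem_ran h⟩ = projKerPerp C h := by
    intro h
    have hw1 := hC.val_mem (C h) (hC.mem_ran h)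
    have hw2 := hC.map_val (C h) (hC.mem_ran h)
    have hfix : projClosureRan C (C h) = C h :=
      projClosureRan_eq_self C (Submodule.le_topologicalClosure _ ⟨h, rfl⟩)
    have hker : h - Cd ⟨C h, hC.mem_ran h⟩ ∈ LinearMap.ker (C : H₁ →ₗ[ℝ] H₂) := by
      rw [LinearMap.mem_ker, map_sub, ContinuousLinearMap.coe_coe, hw2, hfix, sub_self]
    exact (projKerPerp_eq_of C h _ hw1 hker).symm
  -- Step C : evaluating the SVD at `u i`
  have hCuσ : ∀ i, projClosureRan B (M (projKerPerp C (u i))) = σ i • v i := by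
    intro i
    rw [hSVD (u i), tsum_eq_single i ?_]
    · rw [real_inner_self_eq_norm_sq, hu.1 i]
      norm_num
    · intro k hk
      rw [hu.2 (Ne.symm hk), mul_zero, zero_smul]
  -- Step D : `σ i ≠ 0 → u i ∈ (ker C)ᗮ`
  have hD : ∀ i, σ i ≠ 0 → u i ∈ (LinearMap.ker (C : H₁ →ₗ[ℝ] H₂))ᗮ := by
    intro i hi
    rw [Submodule.mem_orthogonal]
    intro h hh
    have hzero : (0 : H₄) = ∑' k, (σ k * ⟪h, u k⟫) • v k := by
      rw [← hSVD h, projKerPerp_of_mem_ker C hh, map_zero, map_zero]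
    have hsum : Summable fun k => (σ k * ⟪h, u k⟫) • v k := by
      have hs2 : Summable fun k => ‖σ k * ⟪h, u k⟫‖ ^ 2 := by
        refine Summable.of_nonneg_of_le (fun k => by positivity) (fun k => ?_)
          ((hu.inner_products_summable h).mul_left ((σ 0) ^ 2))
        have h1 : ‖σ k * ⟪h, u k⟫‖ ^ 2 = (σ k) ^ 2 * ‖⟪u k, h⟫‖ ^ 2 := by
          rw [real_inner_comm h (u k), norm_mul, mul_pow, Real.norm_eq_abs (σ k), sq_abs]
        rw [h1]
        have h2 : (σ k) ^ 2 ≤ (σ 0) ^ 2 := by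
          have := hσmono (Nat.zero_le k)
          nlinarith [hσpos k, hσpos 0]
        have h3 : (0:ℝ) ≤ ‖⟪u k, h⟫‖ ^ 2 := by positivity
        nlinarith
      have := (hv.orthogonalFamily.summable_iff_norm_sq_summable
        (fun k => σ k * ⟪h, u k⟫)).mpr hs2
      simpa only [LinearIsometry.toSpanSingleton_apply] using this
    have hmap : (0:ℝ) = ∑' k, ⟪v i, (σ k * ⟪h, u k⟫) • v k⟫ := by
      calc (0:ℝ) = (innerSL ℝ (v i)) (0 : H₄) := by simp
        _ = (innerSL ℝ (v i)) (∑' k, (σ k * ⟪h, u k⟫) • v k) := by rw [← hzero]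
        _ = ∑' k, ⟪v i, (σ k * ⟪h, u k⟫) • v k⟫ := by
            rw [ContinuousLinearMap.map_tsum _ hsum]
            rfl
    have hval : ∑' k, ⟪v i, (σ k * ⟪h, u k⟫) • v k⟫ = σ i * ⟪h, u i⟫ := by
      rw [tsum_eq_single i ?_]
      · rw [real_inner_smul_right, real_inner_self_eq_norm_sq, hv.1 i]
        norm_num
      · intro k hk
        rw [real_inner_smul_right, hv.2 (Ne.symm hk), mul_zero]
    have : σ i * ⟪h, u i⟫ = 0 := by rw [← hval, ← hmap]
    rcases mul_eq_zero.mp this with h' | h'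
    · exact absurd h' hi
    · exact h'
  -- Step E
  have hE : ∀ i (h : H₁), σ i * ⟪projKerPerp C h, u i⟫ = σ i * ⟪h, u i⟫ := by
    intro i h
    by_cases hi : σ i = 0
    · simp [hi]
    · rw [inner_projKerPerp_left_eq_right, projKerPerp_eq_self C (hD i hi)]
  -- Q fixes `σ i • v i`
  have hQv : ∀ i, projClosureRan B (σ i • v i) = σ i • v i := by
    intro i
    rw [← hCuσ i, projClosureRan_eq_self B (projClosureRan_mem B _)]
  -- Step F : `B Bd Y Cd C e j = Y (e j)`
  have hF : ∀ j, B (Bd ⟨Y (Cd ⟨C (e j), hC.mem_ran (e j)⟩), hYdom _⟩) = Y (e j) := by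
    intro j
    have h1 : (⟨Y (Cd ⟨C (e j), hC.mem_ran (e j)⟩), hYdom _⟩ : Bd.domain)
        = ⟨Y (projKerPerp C (e j)), hYdom _⟩ := Subtype.ext (by rw [hA])
    rw [h1, hB.map_val _ (hYdom _), hY (projKerPerp C (e j)), hY (e j), map_sum]
    refine Finset.sum_congr rfl fun i _ => ?_
    calc projClosureRan B ((σ i * ⟪projKerPerp C (e j), u i⟫) • v i)
        = ⟪projKerPerp C (e j), u i⟫ • projClosureRan B (σ i • v i) := by
          rw [← map_smul, smul_smul, mul_comm]
      _ = (σ i * ⟪projKerPerp C (e j), u i⟫) • v i := by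
          rw [hQv i, smul_smul, mul_comm]
      _ = (σ i * ⟪e j, u i⟫) • v i := by rw [hE]
  -- Step G : `σ i * ⟪M u i, v i⟫ = σ i ^ 2`
  have hG : ∀ i, σ i * ⟪M (u i), v i⟫ = σ i ^ 2 := by
    intro i
    by_cases hi : σ i = 0
    · simp [hi]
    · have hP : projKerPerp C (u i) = u i := projKerPerp_eq_self C (hD i hi)
      have h1 : projClosureRan B (M (u i)) = σ i • v i := by
        conv_lhs => rw [← hP]
        exact hCuσ i
      have h2 : ⟪M (u i), σ i • v i⟫ = ‖(σ i • v i : H₄)‖ ^ 2 := by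
        rw [← h1]
        exact inner_projClosureRan_self B (M (u i))
      have h3 : ‖(σ i • v i : H₄)‖ ^ 2 = σ i ^ 2 := by
        rw [norm_smul, hv.1 i, mul_one, Real.norm_eq_abs, sq_abs]
      have h4 : ⟪M (u i), σ i • v i⟫ = σ i * ⟪M (u i), v i⟫ := real_inner_smul_right _ _ _
      rw [← h4, h2, h3]
  -- replace the integrand
  have hstep : (∑' j, ‖M (e j) -
      B (Bd ⟨Y (Cd ⟨C (e j), hC.mem_ran (e j)⟩), hYdom _⟩)‖ ^ 2)
      = ∑' j, ‖M (e j) - Y (e j)‖ ^ 2 := tsum_congr fun j => by rw [hF j]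
  rw [hstep]
  -- inner products term
  set A := ContinuousLinearMap.adjoint M with hAdef
  have hinner_j : ∀ j : ι, ⟪M (e j), Y (e j)⟫
      = ∑ i ∈ Finset.range r, σ i * (⟪u i, e j⟫ * ⟪e j, A (v i)⟫) := by
    intro j
    rw [hY (e j), inner_sum]
    refine Finset.sum_congr rfl fun i _ => ?_
    rw [real_inner_smul_right, ContinuousLinearMap.adjoint_inner_right,
      real_inner_comm (u i) (e j)]
    ring
  have S_inner_i : ∀ i, Summable fun j : ι => σ i * (⟪u i, e j⟫ * ⟪e j, A (v i)⟫) :=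
    fun i => (e.summable_inner_mul_inner (u i) (A (v i))).mul_left (σ i)
  have S_inner : Summable fun j : ι => ⟪M (e j), Y (e j)⟫ := by
    refine Summable.congr (f := fun j => ∑ i ∈ Finset.range r,
      σ i * (⟪u i, e j⟫ * ⟪e j, A (v i)⟫)) ?_ fun j => (hinner_j j).symm
    exact summable_sum fun i _ => S_inner_i i
  have T_inner : (∑' j, ⟪M (e j), Y (e j)⟫) = ∑ i ∈ Finset.range r, σ i ^ 2 := by
    rw [tsum_congr hinner_j, Summable.tsum_finsetSum fun i _ => S_inner_i i]
    refine Finset.sum_congr rfl fun i _ => ?_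
    rw [tsum_mul_left, e.tsum_inner_mul_inner (u i) (A (v i)),
      ContinuousLinearMap.adjoint_inner_right, hG i]
  -- norm term
  have hnorm_j : ∀ j : ι, ‖Y (e j)‖ ^ 2
      = ∑ i ∈ Finset.range r, σ i ^ 2 * (⟪u i, e j⟫ * ⟪e j, u i⟫) := by
    intro j
    rw [hY (e j)]
    have h0 := hv.orthogonalFamily.norm_sum (fun i => σ i * ⟪e j, u i⟫) (Finset.range r)
    simp only [LinearIsometry.toSpanSingleton_apply] at h0
    rw [h0]
    refine Finset.sum_congr rfl fun i _ => ?_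
    rw [norm_mul, mul_pow, Real.norm_eq_abs (σ i), sq_abs, Real.norm_eq_abs, sq_abs,
      real_inner_comm (u i) (e j)]
    ring
  have S_norm_i : ∀ i, Summable fun j : ι => σ i ^ 2 * (⟪u i, e j⟫ * ⟪e j, u i⟫) :=
    fun i => (e.summable_inner_mul_inner (u i) (u i)).mul_left (σ i ^ 2)
  have S_norm : Summable fun j : ι => ‖Y (e j)‖ ^ 2 := by
    refine Summable.congr (f := fun j => ∑ i ∈ Finset.range r,
      σ i ^ 2 * (⟪u i, e j⟫ * ⟪e j, u i⟫)) ?_ fun j => (hnorm_j j).symm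
    exact summable_sum fun i _ => S_norm_i i
  have T_norm : (∑' j, ‖Y (e j)‖ ^ 2) = ∑ i ∈ Finset.range r, σ i ^ 2 := by
    rw [tsum_congr hnorm_j, Summable.tsum_finsetSum fun i _ => S_norm_i i]
    refine Finset.sum_congr rfl fun i _ => ?_
    rw [tsum_mul_left, e.tsum_inner_mul_inner (u i) (u i),
      real_inner_self_eq_norm_sq, hu.1 i]
    norm_num
  -- assemble
  have hsub : Summable fun j : ι => ‖M (e j)‖ ^ 2 - 2 * ⟪M (e j), Y (e j)⟫ :=
    hMHS.sub (S_inner.mul_left 2)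
  calc (∑' j, ‖M (e j) - Y (e j)‖ ^ 2)
      = ∑' j, (‖M (e j)‖ ^ 2 - 2 * ⟪M (e j), Y (e j)⟫ + ‖Y (e j)‖ ^ 2) :=
        tsum_congr fun j => norm_sub_sq_real _ _
    _ = (∑' j, (‖M (e j)‖ ^ 2 - 2 * ⟪M (e j), Y (e j)⟫)) + ∑' j, ‖Y (e j)‖ ^ 2 :=
        Summable.tsum_add hsub S_norm
    _ = ((∑' j, ‖M (e j)‖ ^ 2) - ∑' j, 2 * ⟪M (e j), Y (e j)⟫) + ∑' j, ‖Y (e j)‖ ^ 2 := by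
        rw [Summable.tsum_sub hMHS (S_inner.mul_left 2)]
    _ = ((∑' j, ‖M (e j)‖ ^ 2) - 2 * ∑' j, ⟪M (e j), Y (e j)⟫) + ∑' j, ‖Y (e j)‖ ^ 2 := by
        rw [tsum_mul_left]
    _ = (∑' j, ‖M (e j)‖ ^ 2) - ∑ i ∈ Finset.range r, σ i ^ 2 := by
        rw [T_inner, T_norm]; ring
end
end
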